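/- arXiv:2601.02355 — 2 statements merged into one kernel-verified Lean document; each statement's English description precedes it below -/
import Mathlib

section
/- Let L be a code loop with basis B. Then the cardinality of the group Half(L) of all half-automorphisms of L equals the product of the cardinality of the automorphism group Aut(L) and the cardinality of the group H_B(L) of half-automorphisms fixing every element of B: |Half(L)| = |Aut(L)|·|H_B(L)|. -/
/-- A loop: a binary operation with two-sided identity in which left and right
translations are bijections (equivalently, equations `a·x = b` and `y·a = b`
have unique solutions). -/
structure LoopStr (α : Type*) where
  mul : α → α → α
  one : α
  one_mul : ∀ x, mul one x = x
  mul_one : ∀ x, mul x one = x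
  mulLeft_bij : ∀ a, Function.Bijective (fun x => mul a x)
  mulRight_bij : ∀ a, Function.Bijective (fun x => mul x a)

namespace LoopStr

variable {α : Type*} (S : LoopStr α)

/-- A subset containing `1` and closed under multiplication and (left and right) inverses. -/
def IsClosed (T : Set α) : Prop :=
  S.one ∈ T ∧ (∀ x ∈ T, ∀ y ∈ T, S.mul x y ∈ T) ∧
    (∀ x ∈ T, ∀ y, S.mul x y = S.one → y ∈ T) ∧
    (∀ x ∈ T, ∀ y, S.mul y x = S.one → y ∈ T)

/-- The subloop generated by a set: the smallest closed subset containing it. -/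
def gen (X : Set α) : Set α := ⋂₀ {T | X ⊆ T ∧ S.IsClosed T}

def Generates (X : Set α) : Prop := S.gen X = Set.univ

/-- A basis: a minimal generating set. -/
def IsBasis (X : Set α) : Prop := S.Generates X ∧ ∀ Y ⊂ X, ¬ S.Generates Y

def IsHalfAut (f : α → α) : Prop :=
  Function.Bijective f ∧
    ∀ x y, f (S.mul x y) = S.mul (f x) (f y) ∨ f (S.mul x y) = S.mul (f y) (f x)

def IsAut (f : α → α) : Prop :=
  Function.Bijective f ∧ ∀ x y, f (S.mul x y) = S.mul (f x) (f y)

def IsAntiAut (f : α → α) : Prop :=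
  Function.Bijective f ∧ ∀ x y, f (S.mul x y) = S.mul (f y) (f x)

/-- The commutant of a loop. -/
def commutant : Set α := {c | ∀ x, S.mul c x = S.mul x c}

/-- The nucleus of a loop. -/
def nucleus : Set α :=
  {a | ∀ u v, S.mul (S.mul a u) v = S.mul a (S.mul u v) ∧
        S.mul (S.mul u a) v = S.mul u (S.mul a v) ∧
        S.mul (S.mul u v) a = S.mul u (S.mul v a)}

end LoopStr

/-- A code loop: a finite Moufang loop with a unique nontrivial square `neg` (written `-1`),
which (by Chein–Goodaire) is central of order 2, and all squares, commutators and
associators lie in `{1, neg}`. -/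
structure CodeLoop (α : Type*) extends LoopStr α where
  finite : Finite α
  moufang : ∀ x y z, mul (mul x (mul z x)) y = mul x (mul z (mul x y))
  neg : α
  neg_ne_one : neg ≠ one
  neg_is_square : ∃ x, mul x x = neg
  square_unique : ∀ m, m ≠ one → (∃ x, mul x x = m) → m = neg
  neg_mul_comm : ∀ x, mul neg x = mul x neg
  neg_mul_assoc₁ : ∀ x y, mul (mul neg x) y = mul neg (mul x y)
  neg_mul_assoc₂ : ∀ x y, mul (mul x neg) y = mul x (mul neg y)
  neg_mul_assoc₃ : ∀ x y, mul (mul x y) neg = mul x (mul y neg)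
  neg_neg : mul neg neg = one
  square_mem : ∀ x, mul x x = one ∨ mul x x = neg
  comm_mem : ∀ x y, mul x y = mul y x ∨ mul x y = mul (mul y x) neg
  assoc_mem : ∀ x y z, mul (mul x y) z = mul x (mul y z) ∨
      mul (mul x y) z = mul (mul x (mul y z)) neg

/-- The left-normed product `a_σ` of the basis elements indexed by `σ`, in increasing order. -/
def aSig {α : Type*} (S : LoopStr α) {n : ℕ} (a : Fin n → α) (σ : Finset (Fin n)) : α :=
  ((σ.sort (· ≤ ·)).map a).foldl S.mul S.one

/-!
A half-automorphism `f` fixes `-1` and preserves commutators, since it maps the finite set of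
non-commuting pairs injectively into itself; as the associator `(x, y, z)` of a code loop equals
`[xy, z][x, z][y, z]`, it preserves associators too. Hence the pairs `(x, ±f x)` form a code loop,
and multiplying normal forms `±b₁⋯bₖ` over a basis inside it shows that `±∏ bᵢ ↦ ±∏ f bᵢ`, well
defined because normal forms over a minimal generating set are unique, is an automorphism `g`
agreeing with `f` on the basis. So `(g, h) ↦ g ∘ h` is a bijection `Aut(L) × H_B(L) → Half(L)`
with inverse `f ↦ (g, g⁻¹ ∘ f)`.
-/

namespace LoopStr

variable {α : Type*} (S : LoopStr α)

lemma gen_subset_of_isClosed {X T : Set α} (hX : X ⊆ T) (hT : S.IsClosed T) : S.gen X ⊆ T :=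
  Set.sInter_subset_of_mem ⟨hX, hT⟩

lemma subset_gen (X : Set α) : X ⊆ S.gen X :=
  fun _ hx => Set.mem_sInter.mpr fun _ hT => hT.1 hx

lemma isClosed_gen (X : Set α) : S.IsClosed (S.gen X) := by
  refine ⟨Set.mem_sInter.mpr fun _ hT => hT.2.1, ?_, ?_, ?_⟩
  · exact fun x hx y hy => Set.mem_sInter.mpr fun T hT => hT.2.2.1 x (hx T hT) y (hy T hT)
  · exact fun x hx y hxy => Set.mem_sInter.mpr fun T hT => hT.2.2.2.1 x (hx T hT) y hxy
  · exact fun x hx y hxy => Set.mem_sInter.mpr fun T hT => hT.2.2.2.2 x (hx T hT) y hxy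

lemma eq_of_generates {X T : Set α} (hX : S.Generates X) (hXT : X ⊆ T) (hT : S.IsClosed T) :
    T = Set.univ :=
  Set.eq_univ_of_univ_subset (hX ▸ S.gen_subset_of_isClosed hXT hT)

lemma mul_left_cancel {a x y : α} (h : S.mul a x = S.mul a y) : x = y := (S.mulLeft_bij a).1 h

lemma mul_right_cancel {a x y : α} (h : S.mul x a = S.mul y a) : x = y := (S.mulRight_bij a).1 h

variable {S}

lemma IsAut.isHalfAut {g : α → α} (hg : S.IsAut g) : S.IsHalfAut g :=
  ⟨hg.1, fun x y => Or.inl (hg.2 x y)⟩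

lemma IsHalfAut.comp_of_isAut {g h : α → α} (hh : S.IsHalfAut h) (hg : S.IsAut g) :
    S.IsHalfAut (g ∘ h) := by
  refine ⟨hg.1.comp hh.1, fun x y => ?_⟩
  simp only [Function.comp_apply, ← hg.2]
  exact (hh.2 x y).imp (congrArg g) (congrArg g)

lemma IsHalfAut.map_mul_self {f : α → α} (hf : S.IsHalfAut f) (x : α) :
    f (S.mul x x) = S.mul (f x) (f x) :=
  (hf.2 x x).elim id id

lemma IsHalfAut.map_one {f : α → α} (hf : S.IsHalfAut f) : f S.one = S.one :=
  S.mul_right_cancel (a := f S.one) (by rw [← hf.map_mul_self, S.mul_one, S.one_mul])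

lemma IsAut.map_one {g : α → α} (hg : S.IsAut g) : g S.one = S.one :=
  hg.isHalfAut.map_one

lemma IsAut.symm {g : α → α} (hg : S.IsAut g) : S.IsAut (Equiv.ofBijective g hg.1).symm := by
  set E := Equiv.ofBijective g hg.1
  have hE : ∀ z, g (E.symm z) = z := E.apply_symm_apply
  refine ⟨E.symm.bijective, fun x y => hg.1.1 ?_⟩
  rw [hg.2, hE, hE, hE]

lemma IsAut.ext_of_generates {X : Set α} (hX : S.Generates X) {g g' : α → α}
    (hg : S.IsAut g) (hg' : S.IsAut g') (h : ∀ x ∈ X, g x = g' x) : g = g' := by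
  have hinv : ∀ x y, g x = g' x → g (S.mul x y) = g' (S.mul x y) → g y = g' y :=
    fun x y hx hxy => S.mul_left_cancel (a := g x) (by rw [← hg.2, hxy, hg'.2, hx])
  have hinv' : ∀ x y, g x = g' x → g (S.mul y x) = g' (S.mul y x) → g y = g' y :=
    fun x y hx hxy => S.mul_right_cancel (a := g x) (by rw [← hg.2, hxy, hg'.2, hx])
  have hT : S.IsClosed {x | g x = g' x} := by
    refine ⟨hg.map_one.trans hg'.map_one.symm, fun x hx y hy => ?_, fun x hx y hxy => ?_,
      fun x hx y hxy => ?_⟩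
    · exact (hg.2 x y).trans ((congrArg₂ S.mul hx hy).trans (hg'.2 x y).symm)
    · exact hinv x y hx (by simp only [hxy, hg.map_one, hg'.map_one])
    · exact hinv' x y hx (by simp only [hxy, hg.map_one, hg'.map_one])
  funext x
  exact Set.eq_univ_iff_forall.mp (S.eq_of_generates hX h hT) x

variable (S)

lemma exists_isAut_of_graph [Finite α] {D : Type*} (ρ : D → α × α)
    (hfst : Function.Bijective fun d => (ρ d).1) (hsnd : Function.Surjective fun d => (ρ d).2)
    (hmul : ∀ d e, ∃ d', ρ d' = (S.mul (ρ d).1 (ρ e).1, S.mul (ρ d).2 (ρ e).2)) :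
    ∃ g : α → α, S.IsAut g ∧ ∀ d, g (ρ d).1 = (ρ d).2 := by
  set E := Equiv.ofBijective _ hfst
  have hg : ∀ d, (ρ (E.symm (ρ d).1)).2 = (ρ d).2 := fun d => by
    rw [show (ρ d).1 = E d from rfl, E.symm_apply_apply]
  have hsurj : Function.Surjective fun x => (ρ (E.symm x)).2 := fun y =>
    let ⟨d, hd⟩ := hsnd y
    ⟨(ρ d).1, (hg d).trans hd⟩
  refine ⟨_, ⟨⟨Finite.injective_iff_surjective.mpr hsurj, hsurj⟩, fun x y => ?_⟩, hg⟩
  obtain ⟨d, rfl⟩ := E.surjective x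
  obtain ⟨e, rfl⟩ := E.surjective y
  obtain ⟨d', hd'⟩ := hmul d e
  show (ρ (E.symm (S.mul (ρ d).1 (ρ e).1))).2 = S.mul (ρ (E.symm (ρ d).1)).2 (ρ (E.symm (ρ e).1)).2
  rw [hg, hg]
  have h := hg d'
  rw [hd'] at h
  exact h

theorem card_isHalfAut_eq_mul {X : Set α} (hX : S.Generates X)
    (hext : ∀ f, S.IsHalfAut f → ∃ g, S.IsAut g ∧ ∀ x ∈ X, g x = f x) :
    Nat.card {f : α → α // S.IsHalfAut f} =
      Nat.card {g : α → α // S.IsAut g} *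
        Nat.card {h : α → α // S.IsHalfAut h ∧ ∀ x ∈ X, h x = x} := by
  rw [← Nat.card_prod]
  refine (Nat.card_congr (Equiv.ofBijective
    (fun p => ⟨p.1.1 ∘ p.2.1, p.2.2.1.comp_of_isAut p.1.2⟩) ⟨?_, ?_⟩)).symm
  · rintro ⟨⟨g, hg⟩, ⟨h, _, hhX⟩⟩ ⟨⟨g', hg'⟩, ⟨h', _, hh'X⟩⟩ hfg
    have hcomp : g ∘ h = g' ∘ h' := congrArg Subtype.val hfg
    obtain rfl : g = g' := hg.ext_of_generates hX hg' fun x hx => by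
      simpa only [Function.comp_apply, hhX x hx, hh'X x hx] using congrFun hcomp x
    obtain rfl : h = h' := funext fun x => hg.1.1 (congrFun hcomp x)
    rfl
  · rintro ⟨f, hf⟩
    obtain ⟨g, hg, hgX⟩ := hext f hf
    set E := Equiv.ofBijective g hg.1
    refine ⟨⟨⟨g, hg⟩, ⟨E.symm ∘ f, hf.comp_of_isAut hg.symm, fun x hx => ?_⟩⟩, ?_⟩
    · rw [Function.comp_apply, ← hgX x hx, show g x = E x from rfl, E.symm_apply_apply]
    · ext x
      exact E.apply_symm_apply (f x)

end LoopStr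

namespace CodeLoop

open List

variable {α : Type*} (C : CodeLoop α)

local infixl:70 " ⊙ " => C.mul

def twist (x : α) (b : Bool) : α := bif b then x ⊙ C.neg else x

@[simp] lemma twist_false (x : α) : C.twist x false = x := rfl

@[simp] lemma twist_true (x : α) : C.twist x true = x ⊙ C.neg := rfl

lemma twist_twist (x : α) (a b : Bool) : C.twist (C.twist x a) b = C.twist x (a ^^ b) := by
  cases a <;> cases b <;> simp [C.neg_mul_assoc₃, C.neg_neg, C.mul_one]

lemma mul_twist (x y : α) (b : Bool) : x ⊙ C.twist y b = C.twist (x ⊙ y) b := by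
  cases b <;> simp [C.neg_mul_assoc₃]

lemma twist_mul (x y : α) (b : Bool) : C.twist x b ⊙ y = C.twist (x ⊙ y) b := by
  cases b <;> simp [C.neg_mul_assoc₂, C.neg_mul_comm, ← C.neg_mul_assoc₃]

lemma twist_left_inj {x y : α} {b : Bool} : C.twist x b = C.twist y b ↔ x = y := by
  refine ⟨fun h => ?_, congrArg (C.twist · b)⟩
  cases b
  exacts [h, C.mul_right_cancel h]

lemma twist_right_injective (x : α) : Function.Injective (C.twist x) := by
  have : x ≠ x ⊙ C.neg := fun h =>
    C.neg_ne_one (C.mul_left_cancel (a := x) (by rw [C.mul_one, ← h])).symm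
  intro a b h
  cases a <;> cases b <;> simp_all [eq_comm]

lemma twist_one_true : C.twist C.one true = C.neg := C.one_mul _

lemma twist_mul_self (x : α) (b : Bool) : C.twist x b ⊙ C.twist x b = x ⊙ x := by
  rw [twist_mul, mul_twist, twist_twist, Bool.xor_self, twist_false]

lemma eq_twist_comm {x y : α} {b : Bool} (h : x = C.twist y b) : y = C.twist x b := by
  rw [h, twist_twist, Bool.xor_self, twist_false]

lemma eq_of_twist_xor_eq {x : α} {a b : Bool} (h : C.twist x (a ^^ b) = x) : a = b := by
  simpa using C.twist_right_injective x (h.trans (C.twist_false x).symm)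

def EqUpToSign (x y : α) : Prop := ∃ b, x = C.twist y b

local infix:50 " ≐ " => C.EqUpToSign

namespace EqUpToSign

variable {C} {x x' y y' z : α}

@[refl] lemma refl (x : α) : x ≐ x := ⟨false, rfl⟩

lemma symm (h : x ≐ y) : y ≐ x := by
  obtain ⟨b, rfl⟩ := h
  exact ⟨b, C.eq_twist_comm rfl⟩

lemma trans (h : x ≐ y) (h' : y ≐ z) : x ≐ z := by
  obtain ⟨a, rfl⟩ := h
  obtain ⟨b, rfl⟩ := h'
  exact ⟨b ^^ a, twist_twist ..⟩

lemma mul (hx : x ≐ x') (hy : y ≐ y') : x ⊙ y ≐ x' ⊙ y' := by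
  obtain ⟨a, rfl⟩ := hx
  obtain ⟨b, rfl⟩ := hy
  exact ⟨b ^^ a, by rw [twist_mul, mul_twist, twist_twist]⟩

lemma mul_right_cancel (h : x ⊙ z ≐ y ⊙ z) : x ≐ y := by
  obtain ⟨b, hb⟩ := h
  rw [← twist_mul] at hb
  exact ⟨b, C.mul_right_cancel hb⟩

lemma mul_self_eq (h : x ≐ y) : x ⊙ x = y ⊙ y := by
  obtain ⟨b, rfl⟩ := h
  exact twist_mul_self ..

end EqUpToSign

instance : Trans C.EqUpToSign C.EqUpToSign C.EqUpToSign := ⟨EqUpToSign.trans⟩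

lemma twist_eqUpToSign (x : α) (b : Bool) : C.twist x b ≐ x := ⟨b, rfl⟩

lemma neg_eqUpToSign_one : C.neg ≐ C.one := ⟨true, (C.twist_one_true).symm⟩

lemma mul_self_eqUpToSign_one (x : α) : x ⊙ x ≐ C.one := by
  rcases C.square_mem x with h | h
  exacts [⟨false, h⟩, ⟨true, h.trans C.twist_one_true.symm⟩]

lemma mul_assoc_eqUpToSign (x y z : α) : (x ⊙ y) ⊙ z ≐ x ⊙ (y ⊙ z) := by
  rcases C.assoc_mem x y z with h | h
  exacts [⟨false, h⟩, ⟨true, h⟩]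

lemma mul_comm_eqUpToSign (x y : α) : x ⊙ y ≐ y ⊙ x := by
  rcases C.comm_mem x y with h | h
  exacts [⟨false, h⟩, ⟨true, h⟩]

lemma mul_left_comm_eqUpToSign (x y z : α) : x ⊙ (y ⊙ z) ≐ y ⊙ (x ⊙ z) :=
  (C.mul_assoc_eqUpToSign x y z).symm.trans <|
    ((C.mul_comm_eqUpToSign x y).mul (.refl z)).trans (C.mul_assoc_eqUpToSign y x z)

open scoped Classical in
noncomputable def assocBit (x y z : α) : Bool := !decide ((x ⊙ y) ⊙ z = x ⊙ (y ⊙ z))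

open scoped Classical in
noncomputable def commBit (x y : α) : Bool := !decide (x ⊙ y = y ⊙ x)

lemma mul_assoc_eq_twist (x y z : α) : (x ⊙ y) ⊙ z = C.twist (x ⊙ (y ⊙ z)) (C.assocBit x y z) := by
  by_cases h : (x ⊙ y) ⊙ z = x ⊙ (y ⊙ z)
  · simp [assocBit, h]
  · simpa [assocBit, h] using C.assoc_mem x y z

lemma mul_comm_eq_twist (x y : α) : x ⊙ y = C.twist (y ⊙ x) (C.commBit x y) := by
  by_cases h : x ⊙ y = y ⊙ x
  · simp [commBit, h]
  · simpa [commBit, h] using C.comm_mem x y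

lemma assocBit_twist_left (x y z : α) (b : Bool) :
    C.assocBit (C.twist x b) y z = C.assocBit x y z := by
  simp only [assocBit, Bool.not_inj_iff, decide_eq_decide, twist_mul, twist_left_inj]

lemma assocBit_twist_middle (x y z : α) (b : Bool) :
    C.assocBit x (C.twist y b) z = C.assocBit x y z := by
  simp only [assocBit, Bool.not_inj_iff, decide_eq_decide, twist_mul, mul_twist, twist_left_inj]

lemma commBit_twist_left (x y : α) (b : Bool) : C.commBit (C.twist x b) y = C.commBit x y := by
  simp only [commBit, Bool.not_inj_iff, decide_eq_decide, twist_mul, mul_twist, twist_left_inj]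

lemma commBit_twist_right (x y : α) (b : Bool) : C.commBit x (C.twist y b) = C.commBit x y := by
  simp only [commBit, Bool.not_inj_iff, decide_eq_decide, twist_mul, mul_twist, twist_left_inj]

lemma commBit_congr {x x' y y' : α} (hx : x ≐ x') (hy : y ≐ y') :
    C.commBit x y = C.commBit x' y' := by
  obtain ⟨a, rfl⟩ := hx
  obtain ⟨b, rfl⟩ := hy
  rw [commBit_twist_left, commBit_twist_right]

lemma mul_self_mul (x y : α) : (x ⊙ x) ⊙ y = x ⊙ (x ⊙ y) := by
  simpa only [C.one_mul] using C.moufang x y C.one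

lemma assocBit_mul_self_left (x y z : α) : C.assocBit (x ⊙ x) y z = false := by
  obtain ⟨b, hb⟩ := C.mul_self_eqUpToSign_one x
  rw [hb, assocBit_twist_left]
  simp [assocBit, C.one_mul]

lemma assocBit_moufang (x y z : α) : C.assocBit x (z ⊙ x) y = C.assocBit z x y := by
  have h := C.moufang x y z
  rw [mul_assoc_eq_twist, mul_assoc_eq_twist, mul_twist, twist_twist] at h
  exact (C.eq_of_twist_xor_eq h).symm

lemma assocBit_mul_middle (x y z : α) : C.assocBit x (x ⊙ y) z = C.assocBit x y z := by
  have h : ((x ⊙ x) ⊙ y) ⊙ z = x ⊙ (x ⊙ (y ⊙ z)) := by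
    rw [mul_assoc_eq_twist, assocBit_mul_self_left, twist_false, mul_self_mul]
  rw [mul_self_mul, mul_assoc_eq_twist, C.mul_assoc_eq_twist x y z, mul_twist, twist_twist] at h
  exact (C.eq_of_twist_xor_eq h).symm

lemma assocBit_swap (x y z : α) : C.assocBit y x z = C.assocBit x y z := by
  rw [← assocBit_moufang, mul_comm_eq_twist, assocBit_twist_middle, assocBit_mul_middle]

lemma assocBit_eq_commBit (x y z : α) :
    C.assocBit x y z = (C.commBit (x ⊙ y) z ^^ C.commBit x z ^^ C.commBit y z) := by
  have h := C.mul_assoc_eq_twist x y z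
  rw [C.mul_comm_eq_twist y z, mul_twist, C.eq_twist_comm (C.mul_assoc_eq_twist x z y),
    C.mul_comm_eq_twist x z, twist_mul, C.mul_assoc_eq_twist z x y, C.assocBit_swap x z y,
    C.eq_twist_comm (C.mul_comm_eq_twist (x ⊙ y) z)] at h
  simp only [twist_twist] at h
  have := C.twist_right_injective _ (h.symm.trans (C.twist_false _).symm)
  revert this
  cases C.assocBit x y z <;> cases C.assocBit x z y <;> cases C.commBit (x ⊙ y) z <;>
    cases C.commBit x z <;> cases C.commBit y z <;> decide

def inv (x : α) : α := x ⊙ (x ⊙ x)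

lemma inv_mul (x : α) : C.inv x ⊙ x = C.one := by
  rcases C.square_mem x with h | h <;> rw [inv, h]
  · rw [C.mul_one, h]
  · rw [C.neg_mul_assoc₂, C.neg_mul_comm, ← C.neg_mul_assoc₃, h, C.neg_neg]

lemma mul_inv (x : α) : x ⊙ C.inv x = C.one := by
  rw [inv, ← mul_self_mul]
  rcases C.square_mem x with h | h <;> rw [h]
  exacts [C.one_mul _, C.neg_neg]

lemma isClosed_of_mul_mem {T : Set α} (hone : C.one ∈ T) (hneg : C.neg ∈ T)
    (hmul : ∀ x ∈ T, ∀ y ∈ T, x ⊙ y ∈ T) : C.IsClosed T := by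
  have hinv : ∀ x ∈ T, C.inv x ∈ T := fun x hx => by
    rcases C.square_mem x with h | h <;> rw [inv, h]
    exacts [hmul x hx _ hone, hmul x hx _ hneg]
  refine ⟨hone, hmul, fun x hx y hxy => ?_, fun x hx y hxy => ?_⟩
  · rw [C.mul_left_cancel (hxy.trans (C.mul_inv x).symm)]
    exact hinv x hx
  · rw [C.mul_right_cancel (hxy.trans (C.inv_mul x).symm)]
    exact hinv x hx

def listProd (s : List α) : α := s.foldr C.mul C.one

@[simp] lemma listProd_nil : C.listProd [] = C.one := rfl

@[simp] lemma listProd_cons (a : α) (s : List α) : C.listProd (a :: s) = a ⊙ C.listProd s := rfl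

lemma listProd_mem {T : Set α} (hT : C.IsClosed T) {s : List α} (hs : ∀ x ∈ s, x ∈ T) :
    C.listProd s ∈ T := by
  induction s with
  | nil => exact hT.1
  | cons a s ih => exact hT.2.1 a (hs a mem_cons_self) _ (ih fun x hx => hs x (.tail a hx))

lemma exists_listProd_mul_listProd_eqUpToSign {l s t : List α} (hs : s <+ l) (ht : t <+ l) :
    ∃ u, u <+ l ∧ C.listProd s ⊙ C.listProd t ≐ C.listProd u := by
  induction l generalizing s t with
  | nil =>
    rw [sublist_nil.mp hs, sublist_nil.mp ht]
    exact ⟨[], .slnil, ⟨false, C.one_mul _⟩⟩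
  | cons b l ih =>
    cases hs with
    | cons _ hs =>
      cases ht with
      | cons _ ht =>
        obtain ⟨u, hu, h⟩ := ih hs ht
        exact ⟨u, hu.cons b, h⟩
      | cons_cons _ ht =>
        obtain ⟨u, hu, h⟩ := ih hs ht
        exact ⟨b :: u, hu.cons_cons b, (C.mul_left_comm_eqUpToSign _ _ _).trans (.mul (.refl b) h)⟩
    | cons_cons _ hs =>
      cases ht with
      | cons _ ht =>
        obtain ⟨u, hu, h⟩ := ih hs ht
        exact ⟨b :: u, hu.cons_cons b, (C.mul_assoc_eqUpToSign _ _ _).trans (.mul (.refl b) h)⟩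
      | cons_cons _ ht =>
        obtain ⟨u, hu, h⟩ := ih hs ht
        refine ⟨u, hu.cons b, ?_⟩
        calc (b ⊙ _) ⊙ (b ⊙ _) ≐ b ⊙ (b ⊙ (C.listProd _ ⊙ C.listProd _)) :=
              (C.mul_assoc_eqUpToSign _ _ _).trans
                (.mul (.refl b) (C.mul_left_comm_eqUpToSign _ _ _))
          _ ≐ C.one ⊙ C.listProd u := by
              rw [← mul_self_mul]
              exact (C.mul_self_eqUpToSign_one b).mul h
          _ = C.listProd u := C.one_mul _

lemma exists_eqUpToSign_listProd {l : List α} (hl : C.Generates {b | b ∈ l}) (x : α) :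
    ∃ s, s <+ l ∧ x ≐ C.listProd s := by
  have hT : C.IsClosed {x | ∃ s, s <+ l ∧ x ≐ C.listProd s} := by
    refine C.isClosed_of_mul_mem ⟨[], nil_sublist l, .refl _⟩
      ⟨[], nil_sublist l, C.neg_eqUpToSign_one⟩ ?_
    rintro x ⟨s, hs, hx⟩ y ⟨t, ht, hy⟩
    obtain ⟨u, hu, h⟩ := C.exists_listProd_mul_listProd_eqUpToSign hs ht
    exact ⟨u, hu, (hx.mul hy).trans h⟩
  have hlT : {b | b ∈ l} ⊆ {x | ∃ s, s <+ l ∧ x ≐ C.listProd s} := fun b hb =>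
    ⟨[b], singleton_sublist.mpr hb, ⟨false, (C.mul_one b).symm⟩⟩
  exact Set.eq_univ_iff_forall.mp (C.eq_of_generates hl hlT hT) x

lemma listProd_eqUpToSign_mul_listProd_erase [DecidableEq α] {b : α} {s : List α} (hb : b ∈ s) :
    C.listProd s ≐ b ⊙ C.listProd (s.erase b) := by
  induction s with
  | nil => exact absurd hb not_mem_nil
  | cons a s ih =>
    by_cases hab : a = b
    · subst hab
      rw [erase_cons_head]
      rfl
    · rw [erase_cons_tail (by simpa using hab), listProd_cons, listProd_cons]
      have hb : b ∈ s := (mem_cons.mp hb).resolve_left (Ne.symm hab)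
      exact (EqUpToSign.mul (.refl a) (ih hb)).trans (C.mul_left_comm_eqUpToSign _ _ _)

lemma eq_univ_of_forall_eqUpToSign_mem {X G : Set α} (hX : C.Generates X) (hG : C.IsClosed G)
    (h : ∀ x ∈ X, ∃ y ∈ G, x ≐ y) : G = Set.univ := by
  have hpm : ∀ x, ∃ y ∈ G, x ≐ y := by
    refine Set.eq_univ_iff_forall.mp (C.eq_of_generates hX h (C.isClosed_of_mul_mem
      ⟨_, hG.1, .refl _⟩ ⟨_, hG.1, C.neg_eqUpToSign_one⟩ ?_))
    rintro x ⟨y, hy, hxy⟩ x' ⟨y', hy', hxy'⟩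
    exact ⟨_, hG.2.1 _ hy _ hy', hxy.mul hxy'⟩
  have hneg : C.neg ∈ G := by
    obtain ⟨x, hx⟩ := C.neg_is_square
    obtain ⟨y, hy, hxy⟩ := hpm x
    rw [← hx, hxy.mul_self_eq]
    exact hG.2.1 _ hy _ hy
  refine C.eq_of_generates hX (fun x hx => ?_) hG
  obtain ⟨y, hy, κ, rfl⟩ := h x hx
  cases κ
  exacts [hy, hG.2.1 _ hy _ hneg]

lemma mem_of_listProd_eqUpToSign {l s t : List α} (hB : C.IsBasis {b | b ∈ l}) (hl : l.Nodup)
    (hs : s <+ l) (ht : t <+ l) (h : C.listProd s ≐ C.listProd t) {b : α} (hb : b ∈ s) :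
    b ∈ t := by
  classical
  by_contra hbt
  set G := C.gen ({x | x ∈ l} \ {b})
  have hG : C.IsClosed G := C.isClosed_gen _
  have hmemG : ∀ x ∈ l, x ≠ b → x ∈ G := fun x hx hxb => C.subset_gen _ ⟨hx, hxb⟩
  set q := C.listProd (s.erase b)
  set w := C.listProd t
  have hq : q ∈ G := C.listProd_mem hG fun x hx =>
    hmemG x (hs.subset (mem_of_mem_erase hx)) ((hl.sublist hs).mem_erase_iff.mp hx).1
  have hw : w ∈ G := C.listProd_mem hG fun x hx =>
    hmemG x (ht.subset hx) (ne_of_mem_of_not_mem hx hbt)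
  have hbG : b ≐ w ⊙ C.inv q := by
    refine EqUpToSign.mul_right_cancel (z := q) ?_
    calc b ⊙ q ≐ w := (C.listProd_eqUpToSign_mul_listProd_erase hb).symm.trans h
      _ = w ⊙ (C.inv q ⊙ q) := by rw [inv_mul, C.mul_one]
      _ ≐ (w ⊙ C.inv q) ⊙ q := (C.mul_assoc_eqUpToSign _ _ _).symm
  refine hB.2 _ (Set.sdiff_singleton_ssubset.mpr (hs.subset hb))
    (C.eq_univ_of_forall_eqUpToSign_mem hB.1 hG fun x hx => ?_)
  by_cases hxb : x = b
  · exact ⟨_, hG.2.1 _ hw _ (hG.2.1 _ hq _ (hG.2.1 _ hq _ hq)), hxb ▸ hbG⟩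
  · exact ⟨x, hmemG x hx hxb, .refl x⟩

lemma eq_of_listProd_eqUpToSign {l s t : List α} (hB : C.IsBasis {b | b ∈ l}) (hl : l.Nodup)
    (hs : s <+ l) (ht : t <+ l) (h : C.listProd s ≐ C.listProd t) : s = t :=
  (hl.perm_iff_eq_of_sublist hs ht).mp <|
    (perm_ext_iff_of_nodup (hl.sublist hs) (hl.sublist ht)).mpr fun _ =>
      ⟨C.mem_of_listProd_eqUpToSign hB hl hs ht h, C.mem_of_listProd_eqUpToSign hB hl ht hs h.symm⟩

lemma bijective_twist_listProd {l : List α} (hB : C.IsBasis {b | b ∈ l}) (hl : l.Nodup) :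
    Function.Bijective fun d : {s // s <+ l} × Bool => C.twist (C.listProd d.1) d.2 := by
  refine ⟨fun ⟨⟨s, hs⟩, δ⟩ ⟨⟨t, ht⟩, ε⟩ h => ?_, fun x => ?_⟩
  · change C.twist (C.listProd s) δ = C.twist (C.listProd t) ε at h
    obtain rfl : s = t := C.eq_of_listProd_eqUpToSign hB hl hs ht
      ((C.twist_eqUpToSign _ δ).symm.trans (h ▸ C.twist_eqUpToSign _ ε))
    obtain rfl : δ = ε := C.twist_right_injective _ h
    rfl
  · obtain ⟨s, hs, δ, hδ⟩ := C.exists_eqUpToSign_listProd hB.1 x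
    exact ⟨⟨⟨s, hs⟩, δ⟩, hδ.symm⟩

end CodeLoop

namespace LoopStr.IsHalfAut

variable {α : Type*} {C : CodeLoop α} {f : α → α}

local infixl:70 " ⊙ " => C.mul

local infix:50 " ≐ " => C.EqUpToSign

lemma map_neg (hf : C.IsHalfAut f) : f C.neg = C.neg := by
  obtain ⟨x, hx⟩ := C.neg_is_square
  have h : f C.neg = f x ⊙ f x := by rw [← hf.map_mul_self, hx]
  refine h.trans ((C.square_mem (f x)).resolve_left fun h1 => C.neg_ne_one (hf.1.1 ?_))
  rw [h, h1, hf.map_one]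

lemma map_twist (hf : C.IsHalfAut f) (x : α) (b : Bool) : f (C.twist x b) = C.twist (f x) b := by
  cases b
  · rfl
  · rcases hf.2 x C.neg with h | h <;> rw [CodeLoop.twist_true, h, hf.map_neg]
    · rfl
    · rw [C.neg_mul_comm]; rfl

lemma map_eqUpToSign (hf : C.IsHalfAut f) {x y : α} (h : x ≐ y) : f x ≐ f y := by
  obtain ⟨b, rfl⟩ := h
  exact ⟨b, hf.map_twist y b⟩

lemma map_mul_eqUpToSign (hf : C.IsHalfAut f) (x y : α) : f (x ⊙ y) ≐ f x ⊙ f y := by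
  rcases hf.2 x y with h | h
  · exact ⟨false, h⟩
  · exact h ▸ C.mul_comm_eqUpToSign _ _

lemma commute_map_iff (hf : C.IsHalfAut f) {x y : α} :
    f x ⊙ f y = f y ⊙ f x ↔ x ⊙ y = y ⊙ x := by
  have := C.finite
  have hinj : Function.Injective (Prod.map f f) := hf.1.1.prodMap hf.1.1
  have hcomm : ∀ a b, f a ⊙ f b = f b ⊙ f a → a ⊙ b = b ⊙ a := fun a b h => hf.1.1 <|
    ((hf.2 a b).elim id (·.trans h.symm)).trans ((hf.2 b a).elim (·.trans h.symm) id).symm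
  refine ⟨hcomm x y, fun hxy => by_contra fun hne => ?_⟩
  set S := {p : α × α | p.1 ⊙ p.2 ≠ p.2 ⊙ p.1}
  have hS : Set.BijOn (Prod.map f f) S S := (S.toFinite.injOn_iff_bijOn_of_mapsTo
    fun p hp h => hp (hcomm _ _ h)).mp hinj.injOn
  obtain ⟨p, hp, hpxy⟩ := hS.surjOn (show (f x, f y) ∈ S from hne)
  obtain rfl : p = (x, y) := hinj hpxy
  exact hp hxy

lemma commBit_map (hf : C.IsHalfAut f) (x y : α) : C.commBit (f x) (f y) = C.commBit x y := by
  simp only [CodeLoop.commBit, Bool.not_inj_iff, decide_eq_decide, hf.commute_map_iff]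

lemma commBit_eq (hf : C.IsHalfAut f) {x x' y y' : α} (hx : x' ≐ f x) (hy : y' ≐ f y) :
    C.commBit x' y' = C.commBit x y :=
  (C.commBit_congr hx hy).trans (hf.commBit_map x y)

lemma assocBit_eq (hf : C.IsHalfAut f) {x x' y y' z z' : α} (hx : x' ≐ f x) (hy : y' ≐ f y)
    (hz : z' ≐ f z) : C.assocBit x' y' z' = C.assocBit x y z := by
  rw [C.assocBit_eq_commBit, C.assocBit_eq_commBit x,
    hf.commBit_eq ((hx.mul hy).trans (hf.map_mul_eqUpToSign x y).symm) hz,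
    hf.commBit_eq hx hz, hf.commBit_eq hy hz]

lemma mul_self_eq_one_or_neg (hf : C.IsHalfAut f) {x x' : α} (hx : x' ≐ f x) :
    (x ⊙ x = C.one ∧ x' ⊙ x' = C.one) ∨ (x ⊙ x = C.neg ∧ x' ⊙ x' = C.neg) := by
  rw [hx.mul_self_eq, ← hf.map_mul_self]
  rcases C.square_mem x with h | h <;> rw [h]
  exacts [.inl ⟨rfl, hf.map_one⟩, .inr ⟨rfl, hf.map_neg⟩]

end LoopStr.IsHalfAut

namespace CodeLoop

open List

variable {α : Type*} (C : CodeLoop α) {f : α → α}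

local infixl:70 " ⊙ " => C.mul

local infix:50 " ≐ " => C.EqUpToSign

lemma pair_eq_or_eq_mul_neg {x x' y y' : α} {b : Bool} (h : x = C.twist y b)
    (h' : x' = C.twist y' b) : (x, x') = (y, y') ∨ (x, x') = (y ⊙ C.neg, y' ⊙ C.neg) := by
  cases b
  · exact .inl (by rw [h, h', twist_false, twist_false])
  · exact .inr (by rw [h, h', twist_true, twist_true])

def graphPoint (f : α → α) (x : α) : {p : α × α // p.2 ≐ f p.1} := ⟨(x, f x), .refl _⟩

def signedGraph (hf : C.IsHalfAut f) : CodeLoop {p : α × α // p.2 ≐ f p.1} where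
  mul p q := ⟨(p.1.1 ⊙ q.1.1, p.1.2 ⊙ q.1.2),
    (p.2.mul q.2).trans (hf.map_mul_eqUpToSign _ _).symm⟩
  one := ⟨(C.one, C.one), ⟨false, hf.map_one.symm⟩⟩
  one_mul p := Subtype.ext (Prod.ext (C.one_mul _) (C.one_mul _))
  mul_one p := Subtype.ext (Prod.ext (C.mul_one _) (C.mul_one _))
  mulLeft_bij a := by
    have := C.finite
    refine Finite.injective_iff_bijective.mp fun p q h => Subtype.ext (Prod.ext ?_ ?_)
    exacts [C.mul_left_cancel (congrArg (·.1.1) h), C.mul_left_cancel (congrArg (·.1.2) h)]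
  mulRight_bij a := by
    have := C.finite
    refine Finite.injective_iff_bijective.mp fun p q h => Subtype.ext (Prod.ext ?_ ?_)
    exacts [C.mul_right_cancel (congrArg (·.1.1) h), C.mul_right_cancel (congrArg (·.1.2) h)]
  finite := by
    have := C.finite
    infer_instance
  moufang x y z := Subtype.ext (Prod.ext (C.moufang _ _ _) (C.moufang _ _ _))
  neg := ⟨(C.neg, C.neg), ⟨false, hf.map_neg.symm⟩⟩
  neg_ne_one h := C.neg_ne_one (congrArg (·.1.1) h)
  neg_is_square := by
    obtain ⟨x, hx⟩ := C.neg_is_square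
    refine ⟨⟨(x, f x), .refl _⟩, Subtype.ext ?_⟩
    rcases hf.mul_self_eq_one_or_neg (.refl (f x)) with h | h
    · exact absurd (hx.symm.trans h.1) C.neg_ne_one
    · exact Prod.ext h.1 h.2
  square_unique m hm := by
    rintro ⟨p, rfl⟩
    refine Subtype.ext ?_
    rcases hf.mul_self_eq_one_or_neg p.2 with h | h
    · exact absurd (Subtype.ext (Prod.ext h.1 h.2)) hm
    · exact Prod.ext h.1 h.2
  neg_mul_comm x := Subtype.ext (Prod.ext (C.neg_mul_comm _) (C.neg_mul_comm _))
  neg_mul_assoc₁ x y := Subtype.ext (Prod.ext (C.neg_mul_assoc₁ _ _) (C.neg_mul_assoc₁ _ _))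
  neg_mul_assoc₂ x y := Subtype.ext (Prod.ext (C.neg_mul_assoc₂ _ _) (C.neg_mul_assoc₂ _ _))
  neg_mul_assoc₃ x y := Subtype.ext (Prod.ext (C.neg_mul_assoc₃ _ _) (C.neg_mul_assoc₃ _ _))
  neg_neg := Subtype.ext (Prod.ext C.neg_neg C.neg_neg)
  square_mem p := by
    rcases hf.mul_self_eq_one_or_neg p.2 with h | h
    exacts [.inl (Subtype.ext (Prod.ext h.1 h.2)), .inr (Subtype.ext (Prod.ext h.1 h.2))]
  comm_mem p q := by
    have h := C.mul_comm_eq_twist p.1.1 q.1.1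
    have h' := C.mul_comm_eq_twist p.1.2 q.1.2
    rw [hf.commBit_eq p.2 q.2] at h'
    exact (C.pair_eq_or_eq_mul_neg h h').imp Subtype.ext Subtype.ext
  assoc_mem p q r := by
    have h := C.mul_assoc_eq_twist p.1.1 q.1.1 r.1.1
    have h' := C.mul_assoc_eq_twist p.1.2 q.1.2 r.1.2
    rw [hf.assocBit_eq p.2 q.2 r.2] at h'
    exact (C.pair_eq_or_eq_mul_neg h h').imp Subtype.ext Subtype.ext

lemma signedGraph_twist_val (hf : C.IsHalfAut f) (p : {p : α × α // p.2 ≐ f p.1}) (b : Bool) :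
    ((C.signedGraph hf).twist p b).1 = (C.twist p.1.1 b, C.twist p.1.2 b) := by
  cases b <;> rfl

lemma signedGraph_listProd_val (hf : C.IsHalfAut f) (s : List α) :
    ((C.signedGraph hf).listProd (s.map (C.graphPoint f))).1 =
      (C.listProd s, C.listProd (s.map f)) := by
  induction s with
  | nil => rfl
  | cons a s ih =>
    simp only [map_cons, listProd_cons]
    exact Prod.ext (congrArg (C.mul a) (congrArg Prod.fst ih))
      (congrArg (C.mul (f a)) (congrArg Prod.snd ih))

lemma listProd_map_eqUpToSign (hf : C.IsHalfAut f) (s : List α) :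
    C.listProd (s.map f) ≐ f (C.listProd s) := by
  simpa only [signedGraph_listProd_val] using
    ((C.signedGraph hf).listProd (s.map (C.graphPoint f))).2

lemma exists_listProd_mul_listProd_map (hf : C.IsHalfAut f) {l s t : List α} (hs : s <+ l)
    (ht : t <+ l) : ∃ u, u <+ l ∧ ∃ γ, C.listProd s ⊙ C.listProd t = C.twist (C.listProd u) γ ∧
      C.listProd (s.map f) ⊙ C.listProd (t.map f) = C.twist (C.listProd (u.map f)) γ := by
  set K := C.signedGraph hf
  obtain ⟨u', hu', γ, h⟩ :=
    K.exists_listProd_mul_listProd_eqUpToSign (hs.map (C.graphPoint f)) (ht.map (C.graphPoint f))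
  obtain ⟨u, hu, rfl⟩ := sublist_map_iff.mp hu'
  have h := congrArg Subtype.val h
  rw [C.signedGraph_twist_val hf, C.signedGraph_listProd_val hf] at h
  change (_ ⊙ _, _ ⊙ _) = _ at h
  rw [C.signedGraph_listProd_val hf, C.signedGraph_listProd_val hf] at h
  exact ⟨u, hu, γ, congrArg Prod.fst h, congrArg Prod.snd h⟩

theorem exists_isAut_eq_of_isHalfAut {l : List α} (hB : C.IsBasis {b | b ∈ l}) (hl : l.Nodup)
    (hf : C.IsHalfAut f) : ∃ g, C.IsAut g ∧ ∀ b ∈ l, g b = f b := by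
  have := C.finite
  let ρ : {s // s <+ l} × Bool → α × α := fun d =>
    (C.twist (C.listProd d.1) d.2, C.twist (C.listProd (d.1.1.map f)) d.2)
  have hsnd : Function.Surjective fun d => (ρ d).2 := by
    intro y
    obtain ⟨x, rfl⟩ := hf.1.2 y
    obtain ⟨s, hs, hx⟩ := C.exists_eqUpToSign_listProd hB.1 x
    obtain ⟨δ, hδ⟩ := (hf.map_eqUpToSign hx).trans (C.listProd_map_eqUpToSign hf s).symm
    exact ⟨⟨⟨s, hs⟩, δ⟩, hδ.symm⟩
  have hmul : ∀ d e, ∃ d', ρ d' = ((ρ d).1 ⊙ (ρ e).1, (ρ d).2 ⊙ (ρ e).2) := by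
    rintro ⟨⟨s, hs⟩, δ⟩ ⟨⟨t, ht⟩, ε⟩
    obtain ⟨u, hu, γ, h, h'⟩ := C.exists_listProd_mul_listProd_map hf hs ht
    refine ⟨⟨⟨u, hu⟩, γ ^^ δ ^^ ε⟩, ?_⟩
    simp only [ρ, twist_mul, mul_twist, h, h', twist_twist]
  obtain ⟨g, hg, hgρ⟩ := C.exists_isAut_of_graph ρ (C.bijective_twist_listProd hB hl) hsnd hmul
  refine ⟨g, hg, fun b hb => ?_⟩
  simpa [ρ, C.mul_one] using hgρ ⟨⟨[b], singleton_sublist.mpr hb⟩, false⟩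

end CodeLoop

/-- `|Half(L)| = |Aut(L)| · |H_B(L)|` for a code loop `L` with basis `B`. -/
theorem stmt11 {α : Type*} (C : CodeLoop α) (B : Set α) (hB : C.toLoopStr.IsBasis B) :
    Nat.card {f : α → α // C.toLoopStr.IsHalfAut f} =
      Nat.card {f : α → α // C.toLoopStr.IsAut f} *
        Nat.card {f : α → α // C.toLoopStr.IsHalfAut f ∧ ∀ b ∈ B, f b = b} := by
  have := C.finite
  obtain ⟨l, hl, rfl⟩ : ∃ l : List α, l.Nodup ∧ {b | b ∈ l} = B :=
    ⟨(Set.toFinite B).toFinset.toList, Finset.nodup_toList _, by ext; simp⟩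
  exact C.card_isHalfAut_eq_mul hB.1 fun f hf => C.exists_isAut_eq_of_isHalfAut hB hl hf
end

section
/- Let L be a nonassociative code loop and let x ∈ L satisfy x·x = −1. If the elementary mapping τ_x is a half-automorphism of L, then x does not belong to the nucleus N(L) of L. -/
/-- In a nonassociative code loop, if the elementary mapping `τ_x` (for `x` with
`x·x = -1`) is a half-automorphism, then `x` is not in the nucleus. -/
theorem stmt14 {α : Type*} (C : CodeLoop α)
    (hna : ¬ ∀ x y z : α, C.mul (C.mul x y) z = C.mul x (C.mul y z))
    (x : α) (hx : C.mul x x = C.neg)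
    (T : α → α)
    (hT1 : T x = C.mul C.neg x) (hT2 : T (C.mul C.neg x) = x)
    (hT3 : ∀ y, y ≠ x → y ≠ C.mul C.neg x → T y = y)
    (hT : C.toLoopStr.IsHalfAut T) :
    x ∉ C.toLoopStr.nucleus := by
  intro hxN
  have hxN' : ∀ u v : α, C.mul (C.mul x u) v = C.mul x (C.mul u v) ∧
      C.mul (C.mul u x) v = C.mul u (C.mul x v) ∧
      C.mul (C.mul u v) x = C.mul u (C.mul v x) := hxN
  apply hna
  intro u v w
  have cr : ∀ a : α, Function.Injective (fun y => C.mul y a) := fun a => (C.mulRight_bij a).1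
  have cl : ∀ a : α, Function.Injective (fun y => C.mul a y) := fun a => (C.mulLeft_bij a).1
  have nsn : ∀ a : α, C.mul C.neg a ≠ a := by
    intro a h
    apply C.neg_ne_one
    apply cr a
    show C.mul C.neg a = C.mul C.one a
    rw [h, C.one_mul]
  have hpull : ∀ a b : α, C.mul a (C.mul C.neg b) = C.mul C.neg (C.mul a b) := by
    intro a b
    rw [C.neg_mul_comm b, ← C.neg_mul_assoc₃, ← C.neg_mul_comm]
  have lalt : ∀ a b : α, C.mul (C.mul a a) b = C.mul a (C.mul a b) := by
    intro a b
    have h := C.moufang a b C.one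
    rwa [C.one_mul, C.one_mul] at h
  have lemA : ∀ s : α, (∀ a b : α, C.mul (C.mul s a) b = C.mul s (C.mul a b)) →
      ∀ t1 t2 t3 : α, C.mul t1 t2 = s →
        C.mul (C.mul t1 t2) t3 = C.mul t1 (C.mul t2 t3) := by
    intro s hs t1 t2 t3 h
    rcases C.square_mem t2 with h2 | h2
    · have ht1 : t1 = C.mul s t2 := by
        apply cr t2
        show C.mul t1 t2 = C.mul (C.mul s t2) t2
        rw [h, hs, h2, C.mul_one]
      rw [h, ht1, hs, ← lalt, h2, C.one_mul]
    · have ht1 : t1 = C.mul s (C.mul C.neg t2) := by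
        apply cr t2
        show C.mul t1 t2 = C.mul (C.mul s (C.mul C.neg t2)) t2
        rw [h, hs, C.neg_mul_assoc₁, h2, C.neg_neg, C.mul_one]
      rw [h, ht1, hs, C.neg_mul_assoc₁ t2 (C.mul t2 t3), ← lalt, h2,
        ← C.neg_mul_assoc₁ C.neg t3, C.neg_neg, C.one_mul]
  have antic : ∀ y : α, y ≠ C.one → y ≠ C.neg → y ≠ x → y ≠ C.mul C.neg x →
      C.mul x y = C.mul C.neg (C.mul y x) := by
    intro y hy1 hy2 hy3 hy4
    have hfix : T (C.mul x y) = C.mul x y := by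
      apply hT3
      · intro h
        exact hy1 (cl x (show C.mul x y = C.mul x C.one by rw [h, C.mul_one]))
      · intro h
        exact hy2 (cl x (show C.mul x y = C.mul x C.neg by rw [h, C.neg_mul_comm]))
    rcases hT.2 x y with hc | hc
    · rw [hfix, hT1, hT3 y hy3 hy4, C.neg_mul_assoc₁] at hc
      exact (nsn _ hc.symm).elim
    · rw [hfix, hT3 y hy3 hy4, hT1, hpull y x] at hc
      exact hc
  have hs_nx : ∀ a b : α, C.mul (C.mul (C.mul C.neg x) a) b
      = C.mul (C.mul C.neg x) (C.mul a b) := by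
    intro a b
    rw [C.neg_mul_assoc₁ x a, C.neg_mul_assoc₁ x (C.mul a b),
      C.neg_mul_assoc₁ (C.mul x a) b, (hxN' a b).1]
  by_cases hu1 : u = C.one
  · rw [hu1, C.one_mul, C.one_mul]
  by_cases hu2 : u = C.neg
  · rw [hu2, C.neg_mul_assoc₁]
  by_cases hu3 : u = x
  · rw [hu3]; exact (hxN' v w).1
  by_cases hu4 : u = C.mul C.neg x
  · rw [hu4]; exact hs_nx v w
  by_cases hv1 : v = C.one
  · rw [hv1, C.mul_one, C.one_mul]
  by_cases hv2 : v = C.neg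
  · rw [hv2, C.neg_mul_assoc₂]
  by_cases hv3 : v = x
  · rw [hv3]; exact (hxN' u w).2.1
  by_cases hv4 : v = C.mul C.neg x
  · rw [hv4, hpull u x, C.neg_mul_assoc₁ x w, hpull u (C.mul x w),
      C.neg_mul_assoc₁ (C.mul u x) w, (hxN' u w).2.1]
  have key : C.mul u v = C.one ∨ C.mul u v = C.neg ∨ C.mul u v = x ∨
      C.mul u v = C.mul C.neg x := by
    by_contra hcon
    push_neg at hcon
    obtain ⟨k1, k2, k3, k4⟩ := hcon
    have hau := antic u hu1 hu2 hu3 hu4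
    have hav := antic v hv1 hv2 hv3 hv4
    have hauv := antic (C.mul u v) k1 k2 k3 k4
    have hcomm : C.mul x (C.mul u v) = C.mul (C.mul u v) x := by
      rw [← (hxN' u v).1, hau, C.neg_mul_assoc₁ (C.mul u x) v, (hxN' u v).2.1,
        hav, hpull u (C.mul v x), ← C.neg_mul_assoc₁ C.neg (C.mul u (C.mul v x)),
        C.neg_neg, C.one_mul, (hxN' u v).2.2]
    rw [hauv] at hcomm
    exact nsn _ hcomm
  rcases key with h | h | h | h
  · exact lemA C.one (fun a b => by rw [C.one_mul, C.one_mul]) u v w h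
  · exact lemA C.neg (fun a b => C.neg_mul_assoc₁ a b) u v w h
  · exact lemA x (fun a b => (hxN' a b).1) u v w h
  · exact lemA (C.mul C.neg x) hs_nx u v w h
end
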